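/- Let Y be a finite label set and Z a finite feature set. Suppose source and target distributions D_S and D_T on Z × Y satisfy D_S(z | y) = D_T(z | y) for all y with D_S(y) > 0 and D_T(y) > 0, and that a fixed deterministic classifier H : Z → Y is used in both domains, producing prediction ŷ = H(z). Then for every predicted label ŷ, D_T(ŷ) = Σ_{y ∈ Y} D_S(ŷ, y) · (D_T(y) / D_S(y)), where D_S(ŷ, y) is the joint source probability of prediction ŷ and true label y. -/
import Mathlib


/-- Label-shift identity (Theorem 1): if the class-conditional feature
distributions agree and a common deterministic classifier `H` is used, then
the target prediction marginal is the distortion-weighted sum of the source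
joint prediction–label probabilities. -/
theorem stmt_0 {Z Y : Type*} [Fintype Z] [Fintype Y] [DecidableEq Y]
    (DS DT : Z × Y → ℝ)
    (hDSnn : ∀ p, 0 ≤ DS p) (hDTnn : ∀ p, 0 ≤ DT p)
    (hDSsum : ∑ p : Z × Y, DS p = 1) (hDTsum : ∑ p : Z × Y, DT p = 1)
    (H : Z → Y)
    (hSpos : ∀ y : Y, 0 < ∑ z : Z, DS (z, y))
    (hcond : ∀ (z : Z) (y : Y), 0 < ∑ z' : Z, DT (z', y) →
      DS (z, y) / (∑ z' : Z, DS (z', y)) = DT (z, y) / (∑ z' : Z, DT (z', y)))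
    (yhat : Y) :
    (∑ p : Z × Y, if H p.1 = yhat then DT p else 0)
      = ∑ y : Y, (∑ z : Z, if H z = yhat then DS (z, y) else 0)
          * ((∑ z : Z, DT (z, y)) / (∑ z : Z, DS (z, y))) := by
  rw [Fintype.sum_prod_type_right]
  refine Finset.sum_congr rfl fun y _ => ?_
  rcases eq_or_lt_of_le (Finset.sum_nonneg fun z _ => hDTnn (z, y)) with h0 | hpos
  · have hz : ∀ z : Z, DT (z, y) = 0 := by
      intro z
      have := Finset.sum_eq_zero_iff_of_nonneg (fun z _ => hDTnn (z, y)) |>.mp h0.symm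
      exact this z (Finset.mem_univ z)
    rw [← h0]
    simp [hz]
  · have key : ∀ z : Z, DT (z, y)
        = DS (z, y) * ((∑ z' : Z, DT (z', y)) / (∑ z' : Z, DS (z', y))) := by
      intro z
      have h := hcond z y hpos
      field_simp at h ⊢
      linarith [h]
    rw [Finset.sum_mul]
    refine Finset.sum_congr rfl fun z _ => ?_
    by_cases hz : H z = yhat <;> simp [hz, key z]
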